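/- Let f ∈ C(𝕋^{n-1}) have Fourier coefficients f_k and suppose ∑_k (1+|k|)^s |f_k| < ∞ with f_0 = 0, and let ω be (κ,τ)-Diophantine with s ≥ τ. Define u_k = f_k / (1 - e^{2πi⟨k,ω⟩}) for k ≠ 0 and u_0 = 0. Then |u_k| ≤ (1/(4κ))(1+|k|)^τ |f_k| for all k, and the series ∑_k u_k e^{i⟨k,φ⟩} converges absolutely and uniformly to a continuous function u with ∑_k (1+|k|)^{s-τ}|u_k| ≤ (1/(4κ)) ∑_k (1+|k|)^s |f_k|. -/

import Mathlib

/-!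
Choosing `k_n` as the integer nearest to `⟨k,ω⟩`, Jordan's inequality gives
`|1 - e^{2πi⟨k,ω⟩}| = 2|sin π(⟨k,ω⟩ - k_n)| ≥ 4|⟨k,ω⟩ - k_n| ≥ 4κ|k|^{-τ} ≥ 4κ(1+|k|)^{-τ}`,
which is the bound on `u_k`. Multiplying it by `(1+|k|)^{s-τ}` gives the weighted bound, and
as `s ≥ τ` the `u_k` are then absolutely summable, so the Weierstrass M-test applies to the
Fourier series.
-/

open Filter
open scoped Real BigOperators Topology

/-- The `(κ,τ)`-Diophantine condition. -/
def IsDiophantine (m : ℕ) (ω : Fin m → ℝ) (κ τ : ℝ) : Prop :=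
  ∀ (k : Fin m → ℤ) (kn : ℤ), k ≠ 0 →
    κ * (∑ j, |(k j : ℝ)|) ^ (-τ) ≤ |∑ j, ω j * (k j : ℝ) + (kn : ℝ)|

section

open Complex

theorem four_mul_abs_sub_round_le_norm_one_sub_exp (θ : ℝ) :
    4 * |θ - round θ| ≤ ‖1 - exp (2 * π * I * θ)‖ := by
  set ε := θ - round θ
  have hexp : exp (2 * π * I * θ) = exp (I * ↑(2 * π * ε)) := by
    rw [show (θ : ℂ) = ε + (round θ : ℤ) by simp [ε], mul_add, exp_add,
      mul_comm _ ((round θ : ℤ) : ℂ), exp_int_mul_two_pi_mul_I, mul_one]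
    push_cast; ring_nf
  have hε : |π * ε| ≤ π / 2 := by
    rw [abs_mul, abs_of_pos Real.pi_pos]
    nlinarith [abs_sub_round θ, Real.pi_pos]
  rw [hexp, norm_sub_rev, norm_exp_I_mul_ofReal_sub_one, show 2 * π * ε / 2 = π * ε by ring]
  calc 4 * |ε| = 2 * (2 / π * |π * ε|) := by
        rw [abs_mul, abs_of_pos Real.pi_pos]; field_simp; ring
    _ ≤ 2 * |Real.sin (π * ε)| := by gcongr; exact Real.mul_abs_le_abs_sin hε
    _ = ‖2 * Real.sin (π * ε)‖ := by simp

theorem sum_abs_intCast_pos {ι : Type*} [Fintype ι] {k : ι → ℤ} (hk : k ≠ 0) :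
    0 < ∑ j, |(k j : ℝ)| := by
  obtain ⟨j, hj⟩ := Function.ne_iff.mp hk
  exact Finset.sum_pos' (fun i _ => abs_nonneg _)
    ⟨j, Finset.mem_univ j, abs_pos.mpr (Int.cast_ne_zero.mpr hj)⟩

namespace IsDiophantine

variable {m : ℕ} {ω : Fin m → ℝ} {κ τ : ℝ}

theorem four_mul_le_norm_one_sub_exp (hω : IsDiophantine m ω κ τ) {k : Fin m → ℤ} (hk : k ≠ 0) :
    4 * (κ * (∑ j, |(k j : ℝ)|) ^ (-τ)) ≤
      ‖1 - exp (2 * π * I * ∑ j, (k j : ℂ) * (ω j : ℂ))‖ := by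
  set θ := ∑ j, ω j * (k j : ℝ)
  have hθ : ∑ j, (k j : ℂ) * (ω j : ℂ) = θ := by push_cast [θ]; simp only [mul_comm]
  have hdist : κ * (∑ j, |(k j : ℝ)|) ^ (-τ) ≤ |θ - round θ| := by
    simpa [sub_eq_add_neg] using hω k (-round θ) hk
  rw [hθ]
  exact (mul_le_mul_of_nonneg_left hdist (by norm_num)).trans
    (four_mul_abs_sub_round_le_norm_one_sub_exp θ)

theorem norm_div_one_sub_exp_le (hω : IsDiophantine m ω κ τ) (hκ : 0 < κ) (hτ : 0 ≤ τ)
    {k : Fin m → ℤ} (hk : k ≠ 0) (a : ℂ) :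
    ‖a / (1 - exp (2 * π * I * ∑ j, (k j : ℂ) * (ω j : ℂ)))‖ ≤
      (4 * κ)⁻¹ * (1 + ∑ j, |(k j : ℝ)|) ^ τ * ‖a‖ := by
  have hpos := sum_abs_intCast_pos hk
  have hdivisor : 4 * κ * (1 + ∑ j, |(k j : ℝ)|) ^ (-τ) ≤
      ‖1 - exp (2 * π * I * ∑ j, (k j : ℂ) * (ω j : ℂ))‖ := by
    refine le_trans ?_ (hω.four_mul_le_norm_one_sub_exp hk)
    rw [mul_assoc]
    gcongr 4 * (κ * ?_)
    exact Real.rpow_le_rpow_of_nonpos hpos (by linarith) (neg_nonpos.2 hτ)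
  rw [norm_div]
  refine (div_le_div_of_nonneg_left (norm_nonneg a) (by positivity) hdivisor).trans_eq ?_
  rw [Real.rpow_neg (by positivity)]
  field_simp

end IsDiophantine

theorem norm_exp_I_mul_sum_intCast_mul_ofReal {ι : Type*} [Fintype ι] (k : ι → ℤ) (φ : ι → ℝ) :
    ‖exp (I * ∑ j, (k j : ℂ) * (φ j : ℂ))‖ = 1 := by
  simpa using norm_exp_I_mul_ofReal (∑ j, k j * φ j)

theorem exists_continuous_tendstoUniformly_hasSum_fourier {ι : Type*} [Fintype ι]
    {u : (ι → ℤ) → ℂ} (hu : Summable fun k => ‖u k‖) :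
    ∃ U : (ι → ℝ) → ℂ, Continuous U ∧
      TendstoUniformly (fun (S : Finset (ι → ℤ)) (φ : ι → ℝ) =>
        ∑ k ∈ S, u k * exp (I * ∑ j, (k j : ℂ) * (φ j : ℂ))) U atTop ∧
      ∀ φ : ι → ℝ, HasSum (fun k => u k * exp (I * ∑ j, (k j : ℂ) * (φ j : ℂ))) (U φ) := by
  have hbound (k : ι → ℤ) (φ : ι → ℝ) : ‖u k * exp (I * ∑ j, (k j : ℂ) * (φ j : ℂ))‖ ≤ ‖u k‖ := by
    rw [norm_mul, norm_exp_I_mul_sum_intCast_mul_ofReal, mul_one]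
  refine ⟨_, continuous_tsum (fun k => by fun_prop) hu hbound, tendstoUniformly_tsum hu hbound,
    fun φ => (Summable.of_norm_bounded hu (fun k => hbound k φ)).hasSum⟩

end

theorem rpow_sub_mul_le_of_le_mul_rpow {b x y C τ s : ℝ} (hb : 0 < b) (h : x ≤ C * b ^ τ * y) :
    b ^ (s - τ) * x ≤ C * (b ^ s * y) := by
  calc b ^ (s - τ) * x ≤ b ^ (s - τ) * (C * b ^ τ * y) := by gcongr
    _ = C * ((b ^ (s - τ) * b ^ τ) * y) := by ring
    _ = C * (b ^ s * y) := by rw [← Real.rpow_add hb, sub_add_cancel]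

theorem small_divisor_series_general (n : ℕ) (hn : 2 ≤ n) (ω : Fin (n - 1) → ℝ) (κ τ s : ℝ)
    (hκ : 0 < κ) (hτ : (n : ℝ) - 1 < τ) (hs : τ ≤ s)
    (hdio : IsDiophantine (n - 1) ω κ τ)
    (c : (Fin (n - 1) → ℤ) → ℂ)
    (hsum : Summable fun k : Fin (n - 1) → ℤ => (1 + ∑ j, |(k j : ℝ)|) ^ s * ‖c k‖)
    (u : (Fin (n - 1) → ℤ) → ℂ) (hu0 : u 0 = 0)
    (huk : ∀ k : Fin (n - 1) → ℤ, k ≠ 0 →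
      u k = c k / (1 - Complex.exp (2 * (Real.pi : ℂ) * Complex.I *
        ∑ j, (k j : ℂ) * (ω j : ℂ)))) :
    (∀ k : Fin (n - 1) → ℤ,
      ‖u k‖ ≤ (4 * κ)⁻¹ * (1 + ∑ j, |(k j : ℝ)|) ^ τ * ‖c k‖) ∧
    (Summable fun k : Fin (n - 1) → ℤ => (1 + ∑ j, |(k j : ℝ)|) ^ (s - τ) * ‖u k‖) ∧
    (∑' k : Fin (n - 1) → ℤ, (1 + ∑ j, |(k j : ℝ)|) ^ (s - τ) * ‖u k‖) ≤
      (4 * κ)⁻¹ * ∑' k : Fin (n - 1) → ℤ, (1 + ∑ j, |(k j : ℝ)|) ^ s * ‖c k‖ ∧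
    ∃ U : (Fin (n - 1) → ℝ) → ℂ, Continuous U ∧
      TendstoUniformly (fun (S : Finset (Fin (n - 1) → ℤ)) (φ : Fin (n - 1) → ℝ) =>
        ∑ k ∈ S, u k * Complex.exp (Complex.I * ∑ j, (k j : ℂ) * (φ j : ℂ)))
        U atTop ∧
      ∀ φ : Fin (n - 1) → ℝ,
        HasSum (fun k : Fin (n - 1) → ℤ =>
          u k * Complex.exp (Complex.I * ∑ j, (k j : ℂ) * (φ j : ℂ))) (U φ) := by
  have hτ0 : 0 ≤ τ := by
    have : (2 : ℝ) ≤ n := by exact_mod_cast hn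
    linarith
  have hcoeff (k : Fin (n - 1) → ℤ) : ‖u k‖ ≤ (4 * κ)⁻¹ * (1 + ∑ j, |(k j : ℝ)|) ^ τ * ‖c k‖ := by
    rcases eq_or_ne k 0 with rfl | hk
    · rw [hu0, norm_zero]; positivity
    · rw [huk k hk]; exact hdio.norm_div_one_sub_exp_le hκ hτ0 hk (c k)
  have hweighted (k : Fin (n - 1) → ℤ) : (1 + ∑ j, |(k j : ℝ)|) ^ (s - τ) * ‖u k‖ ≤
      (4 * κ)⁻¹ * ((1 + ∑ j, |(k j : ℝ)|) ^ s * ‖c k‖) :=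
    rpow_sub_mul_le_of_le_mul_rpow (by positivity) (hcoeff k)
  have hsum_u : Summable fun k : Fin (n - 1) → ℤ => (1 + ∑ j, |(k j : ℝ)|) ^ (s - τ) * ‖u k‖ :=
    .of_nonneg_of_le (fun k => by positivity) hweighted (hsum.mul_left _)
  have hsum_norm_u : Summable fun k => ‖u k‖ :=
    .of_nonneg_of_le (fun k => norm_nonneg _) (fun k => le_mul_of_one_le_left (norm_nonneg _)
      (Real.one_le_rpow (le_add_of_nonneg_right (by positivity)) (sub_nonneg.2 hs))) hsum_u
  refine ⟨hcoeff, hsum_u, ?_, exists_continuous_tendstoUniformly_hasSum_fourier hsum_norm_u⟩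
  rw [← tsum_mul_left]
  exact hsum_u.tsum_le_tsum hweighted (hsum.mul_left _)

/-- quantitative solution of the homological equation on the Fourier
side.  If `∑ (1+|k|)^s |c_k| < ∞`, `c_0 = 0`, `ω` is `(κ,τ)`-Diophantine and `s ≥ τ`,
then the coefficients `u_k = c_k/(1 - e^{2πi⟨k,ω⟩})` satisfy
`|u_k| ≤ (1+|k|)^τ |c_k|/(4κ)`, the weighted series of the `u_k` converges with
`∑(1+|k|)^{s-τ}|u_k| ≤ (4κ)⁻¹ ∑(1+|k|)^s|c_k|`, and the Fourier series
`∑ u_k e^{i⟨k,φ⟩}` converges absolutely and uniformly to a continuous function. -/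
theorem small_divisor_series (n : ℕ) (hn : 2 ≤ n) (ω : Fin (n - 1) → ℝ) (κ τ s : ℝ)
    (hκ : 0 < κ) (hτ : (n : ℝ) - 1 < τ) (hs : τ ≤ s)
    (hdio : IsDiophantine (n - 1) ω κ τ)
    (c : (Fin (n - 1) → ℤ) → ℂ)
    (hsum : Summable fun k : Fin (n - 1) → ℤ => (1 + ∑ j, |(k j : ℝ)|) ^ s * ‖c k‖)
    (hc0 : c 0 = 0)
    (u : (Fin (n - 1) → ℤ) → ℂ) (hu0 : u 0 = 0)
    (huk : ∀ k : Fin (n - 1) → ℤ, k ≠ 0 →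
      u k = c k / (1 - Complex.exp (2 * (Real.pi : ℂ) * Complex.I *
        ∑ j, (k j : ℂ) * (ω j : ℂ)))) :
    (∀ k : Fin (n - 1) → ℤ,
      ‖u k‖ ≤ (4 * κ)⁻¹ * (1 + ∑ j, |(k j : ℝ)|) ^ τ * ‖c k‖) ∧
    (Summable fun k : Fin (n - 1) → ℤ => (1 + ∑ j, |(k j : ℝ)|) ^ (s - τ) * ‖u k‖) ∧
    (∑' k : Fin (n - 1) → ℤ, (1 + ∑ j, |(k j : ℝ)|) ^ (s - τ) * ‖u k‖) ≤
      (4 * κ)⁻¹ * ∑' k : Fin (n - 1) → ℤ, (1 + ∑ j, |(k j : ℝ)|) ^ s * ‖c k‖ ∧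
    ∃ U : (Fin (n - 1) → ℝ) → ℂ, Continuous U ∧
      TendstoUniformly (fun (S : Finset (Fin (n - 1) → ℤ)) (φ : Fin (n - 1) → ℝ) =>
        ∑ k ∈ S, u k * Complex.exp (Complex.I * ∑ j, (k j : ℂ) * (φ j : ℂ)))
        U atTop ∧
      ∀ φ : Fin (n - 1) → ℝ,
        HasSum (fun k : Fin (n - 1) → ℤ =>
          u k * Complex.exp (Complex.I * ∑ j, (k j : ℂ) * (φ j : ℂ))) (U φ) :=
  small_divisor_series_general n hn ω κ τ s hκ hτ hs hdio c hsum u hu0 huk
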